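/- No bracketing in the recursively defined set B contains '[[' whose inner '[' matches a ']' immediately followed by the matching ']' of the outer '['; equivalently, no bracketing contains a factor of the form [[γ]] where [γ] is a closed subword. -/
import Mathlib


/-- Symbols: an input `•`, a left bracket `[`, a right bracket `]`. -/
inductive BSym : Type
  | dot : BSym
  | lb : BSym
  | rb : BSym
deriving DecidableEq

/-- A word is balanced if every prefix has at least as many `[` as `]`
and the total numbers of `[` and `]` agree. -/
def BalancedWord (w : List BSym) : Prop :=
  (∀ p : List BSym, p <+: w → p.count BSym.rb ≤ p.count BSym.lb) ∧
    w.count BSym.lb = w.count BSym.rb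

/-- The recursively defined set of bracketings: `•` is a bracketing; if `β` is a
bracketing not of the form `[α]` for a bracketing `α`, then `[β]` is a bracketing;
a concatenation of two bracketings is a bracketing.
(For a bracketing `β`, being of the form `[α]` with `α` a bracketing is equivalent
to being of the form `[γ]` with `γ` balanced, which is the strictly positive
formulation used here.) -/
inductive Brak : List BSym → Prop
  | dot : Brak [BSym.dot]
  | brkt {β : List BSym} (hβ : Brak β)
      (hne : ¬ ∃ γ : List BSym, BalancedWord γ ∧ β = BSym.lb :: (γ ++ [BSym.rb])) :
      Brak (BSym.lb :: (β ++ [BSym.rb]))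
  | append {α β : List BSym} (hα : Brak α) (hβ : Brak β) : Brak (α ++ β)

open BSym
lemma brak_balanced : ∀ w : List BSym, Brak w → BalancedWord w := by
  intro w h
  induction h with
  | dot =>
    constructor
    · intro p hp
      have h1 := hp.sublist.count_le rb
      have h2 := hp.sublist.count_le lb
      simp [List.count_cons] at h1 ⊢
      omega
    · simp [List.count_cons]
  | brkt hβ hne ih =>
    obtain ⟨ihp, iht⟩ := ih
    constructor
    · intro p hp
      rw [List.prefix_cons_iff] at hp
      rcases hp with rfl | ⟨q, rfl, hq⟩
      · simp
      · rw [show _ ++ [rb] = _ from rfl, List.prefix_concat_iff] at hq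
        rcases hq with rfl | hq
        · simp [List.count_append, List.count_cons]; omega
        · have := ihp q hq
          simp [List.count_cons]; omega
    · simp [List.count_append, List.count_cons]; omega
  | append hα hβ ihα ihβ =>
    obtain ⟨ihpα, ihtα⟩ := ihα
    obtain ⟨ihpβ, ihtβ⟩ := ihβ
    constructor
    · intro p hp
      obtain ⟨t, ht⟩ := hp
      rw [List.append_eq_append_iff] at ht
      rcases ht with ⟨a', rfl, ht⟩ | ⟨c', rfl, ht⟩
      · exact ihpα p ⟨a', rfl⟩
      · have := ihpβ c' ⟨t, ht.symm⟩
        simp [List.count_append]; omega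
    · simp [List.count_append]; omega

/-- every prefix of `[γ]` with `γ` balanced has at most as many `]` as `[`. -/
lemma pref_closed {γ : List BSym} (hγ : BalancedWord γ) :
    ∀ p : List BSym, p <+: lb :: (γ ++ [rb]) → p.count rb ≤ p.count lb := by
  intro p hp
  rw [List.prefix_cons_iff] at hp
  rcases hp with rfl | ⟨q, rfl, hq⟩
  · simp
  · rw [show γ ++ [rb] = _ from rfl, List.prefix_concat_iff] at hq
    rcases hq with rfl | hq
    · have := hγ.2; simp [List.count_append, List.count_cons]; omega
    · have := hγ.1 q hq
      simp [List.count_cons]; omega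

/-- no bracketing contains a factor of the form `[[γ]]` in which the
inner `[γ]` is a closed subword, i.e. `γ` is balanced (so the inner `[` matches the
`]` immediately preceding the matching `]` of the outer `[`). -/
theorem brak_no_double_bracket :
    ∀ w : List BSym, Brak w →
      ¬ ∃ (x γ y : List BSym), BalancedWord γ ∧
        w = x ++ ([BSym.lb, BSym.lb] ++ γ ++ [BSym.rb, BSym.rb]) ++ y := by
  intro w h
  induction h with
  | dot =>
    rintro ⟨x, γ, y, hγ, hw⟩
    have : ([dot] : List BSym).length = _ := congrArg List.length hw
    simp [List.length_append] at this
    omega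
  | @brkt β hβ hne ih =>
    rintro ⟨x, γ, y, hγ, hw⟩
    have hbal := brak_balanced β hβ
    match x with
    | [] =>
      simp only [List.nil_append, List.cons_append, List.cons.injEq] at hw
      obtain ⟨-, hw⟩ := hw
      -- hw : β ++ [rb] = lb :: (γ ++ ([rb, rb] ++ y))  roughly
      match y, hw with
      | [], hw =>
        apply hne
        refine ⟨γ, hγ, ?_⟩
        have : β ++ [rb] = (lb :: (γ ++ [rb])) ++ [rb] := by
          rw [hw]; simp
        exact (List.append_inj' this rfl).1
      | c :: y', hw =>
        -- β has the prefix lb :: γ ++ [rb, rb], violating balance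
        obtain ⟨y'', d, hyd⟩ : ∃ y'' d, c :: y' = y'' ++ [d] := by
          rcases List.eq_nil_or_concat (c :: y') with h | ⟨a, b, h⟩
          · simp at h
          · exact ⟨a, b, by simpa using h⟩
        rw [hyd] at hw
        have hβeq : β = lb :: γ ++ [rb, rb] ++ y'' := by
          have : β ++ [rb] = (lb :: γ ++ [rb, rb] ++ y'') ++ [d] := by
            rw [hw]; simp
          exact (List.append_inj' this rfl).1
        have hpre : (lb :: γ ++ [rb, rb]) <+: β := ⟨y'', by rw [hβeq]⟩
        have := hbal.1 _ hpre
        have h2 := hγ.2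
        simp [List.count_append, List.count_cons] at this
        omega
    | a :: x' =>
      have ha : lb = a := by
        simpa using congrArg (fun l => l.head?) hw
      subst ha
      simp only [List.cons_append, List.cons.injEq] at hw
      obtain ⟨-, hw⟩ := hw
      match y, hw with
      | [], hw =>
        -- β = x' ++ [lb, lb] ++ γ ++ [rb]; total counts of β contradict balance
        have hβeq : β = x' ++ ([lb, lb] ++ γ ++ [rb]) := by
          have : β ++ [rb] = (x' ++ ([lb, lb] ++ γ ++ [rb])) ++ [rb] := by
            rw [hw]; simp
          exact (List.append_inj' this rfl).1
        have hpx := hbal.1 x' ⟨_, hβeq.symm⟩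
        have ht := hbal.2
        rw [hβeq] at ht
        have := hγ.2
        simp [List.count_append, List.count_cons] at ht
        omega
      | c :: y', hw =>
        obtain ⟨y'', d, hyd⟩ : ∃ y'' d, c :: y' = y'' ++ [d] := by
          rcases List.eq_nil_or_concat (c :: y') with h | ⟨a, b, h⟩
          · simp at h
          · exact ⟨a, b, by simpa using h⟩
        rw [hyd] at hw
        have hβeq : β = x' ++ ([lb, lb] ++ γ ++ [rb, rb]) ++ y'' := by
          have : β ++ [rb] = (x' ++ ([lb, lb] ++ γ ++ [rb, rb]) ++ y'') ++ [d] := by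
            rw [hw]; simp
          exact (List.append_inj' this rfl).1
        exact ih ⟨x', γ, y'', hγ, hβeq⟩
  | @append α β hα hβ ihα ihβ =>
    rintro ⟨x, γ, y, hγ, hw⟩
    have hbalα := brak_balanced α hα
    have hbalβ := brak_balanced β hβ
    rw [List.append_assoc, List.append_eq_append_iff] at hw
    rcases hw with ⟨a', rfl, hb⟩ | ⟨c', rfl, hd⟩
    · exact ihβ ⟨a', γ, y, hγ, by rw [hb]; simp⟩
    · rw [List.append_eq_append_iff] at hd
      rcases hd with ⟨a', rfl, hy⟩ | ⟨e, hf, rfl⟩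
      · exact ihα ⟨x, γ, a', hγ, by simp⟩
      · -- f = c' ++ e, α = x ++ c', β = e ++ y
        match e, hf with
        | [], hf =>
          exact ihα ⟨x, γ, [], hγ, by rw [hf]; simp⟩
        | e₀ :: e', hf =>
          match c' with
          | [] =>
            refine ihβ ⟨[], γ, y, hγ, ?_⟩
            simp only [List.nil_append] at hf ⊢
            rw [← hf]
          | c₀ :: c'' =>
            -- c' is a nonempty proper prefix of [[γ]]: strictly more lb than rb
            have hc : lb = c₀ := by
              simpa using congrArg (fun l => l.head?) hf
            subst hc
            simp only [List.cons_append, List.cons.injEq] at hf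
            obtain ⟨-, hf⟩ := hf
            -- c'' ++ (e₀::e') = lb :: γ ++ [rb, rb] = (lb :: γ ++ [rb]) ++ [rb]
            have hpref : c'' <+: lb :: (γ ++ [rb]) := by
              rcases List.eq_nil_or_concat (e₀ :: e') with h | ⟨e₁, a, he⟩
              · simp at h
              · have he' : e₀ :: e' = e₁ ++ [a] := by simpa using he
                refine ⟨e₁, ?_⟩
                have : (c'' ++ e₁) ++ [a] = (lb :: (γ ++ [rb])) ++ [rb] := by
                  rw [List.append_assoc, ← he', ← hf]; simp
                exact (List.append_inj' this rfl).1
            have h1 := pref_closed hγ c'' hpref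
            -- suffix of α: count lb ≤ count rb for lb::c''
            have h2 := hbalα.1 x ⟨_, rfl⟩
            have h3 := hbalα.2
            simp [List.count_append, List.count_cons] at h3
            omega
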